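/- arXiv:1909.11819 — 7 statements merged into one kernel-verified Lean document; each statement's English description precedes it below -/
import Mathlib

section
/- Consider a parallel network of n roads with affine latency functions ℓ_i(x,y) = k_i·a_i·x + a_i·y + t_i, where a_i > 0, t_i ≥ 0, k_i ≥ 1 for all i, and k_i = 1 for at most one road i. Then any feasible routing (f^h, f^a) that minimizes the social cost C(f^h,f^a) = Σ_i ℓ_i(f^h_i, f^a_i)·(f^h_i + f^a_i) subject to the demand constraints has at most one road i with both f^h_i > 0 and f^a_i > 0. -/
/-- The affine latency function of road `i`: `ℓ_i(x,y) = k_i·a_i·x + a_i·y + t_i`. -/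
def ell {n : ℕ} (a t k : Fin n → ℝ) (i : Fin n) (x y : ℝ) : ℝ :=
  k i * a i * x + a i * y + t i

/-- A routing `(fh, fa)` is feasible for demands `(Fh, Fa)`. -/
def Feasible {n : ℕ} (Fh Fa : ℝ) (fh fa : Fin n → ℝ) : Prop :=
  (∀ i, 0 ≤ fh i) ∧ (∀ i, 0 ≤ fa i) ∧ (∑ i, fh i) = Fh ∧ (∑ i, fa i) = Fa

/-- The social cost `C(fh,fa) = Σ_i ℓ_i(fh_i,fa_i)·(fh_i + fa_i)`. -/
def SocialCost {n : ℕ} (a t k : Fin n → ℝ) (fh fa : Fin n → ℝ) : ℝ :=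
  ∑ i, ell a t k i (fh i) (fa i) * (fh i + fa i)

/-- In a parallel network with affine latencies `ℓ_i(x,y) = k_i a_i x + a_i y + t_i`,
where `a_i > 0`, `t_i ≥ 0`, `k_i ≥ 1` and `k_i = 1` for at most one road, any feasible
routing minimizing the social cost has at most one road carrying both positive
human-driven and positive autonomous flow. -/
theorem separation_of_optimal_routing
    (n : ℕ) (a t k : Fin n → ℝ)
    (ha : ∀ i, 0 < a i) (ht : ∀ i, 0 ≤ t i) (hk : ∀ i, 1 ≤ k i)
    (hk1 : ∀ i j, k i = 1 → k j = 1 → i = j)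
    (Fh Fa : ℝ) (fh fa : Fin n → ℝ)
    (hfeas : Feasible Fh Fa fh fa)
    (hmin : ∀ gh ga : Fin n → ℝ, Feasible Fh Fa gh ga →
      SocialCost a t k fh fa ≤ SocialCost a t k gh ga) :
    ∀ i j, 0 < fh i → 0 < fa i → 0 < fh j → 0 < fa j → i = j := by
  intro i j hfhi hfai hfhj hfaj
  by_contra hij
  have hji : j ≠ i := fun h => hij h.symm
  obtain ⟨hfh0, hfa0, hFh, hFa⟩ := hfeas
  have hAi := ha i
  have hAj := ha j
  set S : ℝ := a i + a j with hSdef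
  set P : ℝ := k i * a i + k j * a j with hPdef
  have hSpos : 0 < S := add_pos hAi hAj
  have hne : k i ≠ 1 ∨ k j ≠ 1 := by
    by_contra h
    push_neg at h
    exact hij (hk1 i j h.1 h.2)
  have hPS : S < P := by
    rcases hne with h | h
    · have h1 : 1 < k i := (hk i).lt_of_ne (Ne.symm h)
      have h2 := hk j
      rw [hSdef, hPdef]
      nlinarith
    · have h1 : 1 < k j := (hk j).lt_of_ne (Ne.symm h)
      have h2 := hk i
      rw [hSdef, hPdef]
      nlinarith
  set du : ℝ := 2 * S with hdu
  set dv : ℝ := -(P + S) with hdv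
  have hdupos : 0 < du := by rw [hdu]; linarith
  have hPSpos : 0 < P + S := by linarith
  set M : ℝ := 2 * S + (P + S) with hM
  have hMpos : 0 < M := by rw [hM]; linarith
  have hduM : du ≤ M := by rw [hdu, hM]; linarith
  have hdvM : P + S ≤ M := by rw [hM]; linarith
  set m0 : ℝ := min (min (fh i) (fh j)) (min (fa i) (fa j)) with hm0
  have hm0pos : 0 < m0 := lt_min (lt_min hfhi hfhj) (lt_min hfai hfaj)
  set ε : ℝ := m0 / M with hεdef
  have hεpos : 0 < ε := div_pos hm0pos hMpos
  have hεM : ε * M = m0 := div_mul_cancel₀ _ (ne_of_gt hMpos)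
  set δ : Fin n → ℝ := fun m => (if m = i then (1:ℝ) else 0) - (if m = j then 1 else 0)
    with hδ
  have hδi : δ i = 1 := by simp [hδ, hij]
  have hδj : δ j = -1 := by simp [hδ, hji]
  have hδsum : (∑ m, δ m) = 0 := by
    simp [hδ, Finset.sum_sub_distrib, Finset.sum_ite_eq']
  set gh : ℝ → Fin n → ℝ := fun s m => fh m + s * du * δ m with hgh
  set ga : ℝ → Fin n → ℝ := fun s m => fa m + s * dv * δ m with hga
  -- feasibility of perturbed flows
  have hfeasS : ∀ s : ℝ, |s| ≤ ε → Feasible Fh Fa (gh s) (ga s) := by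
    intro s hs
    have habs_du : |s * du| ≤ m0 := by
      rw [abs_mul, abs_of_pos hdupos]
      calc |s| * du ≤ ε * du := mul_le_mul_of_nonneg_right hs hdupos.le
        _ ≤ ε * M := mul_le_mul_of_nonneg_left hduM hεpos.le
        _ = m0 := hεM
    have habs_dv : |s * dv| ≤ m0 := by
      rw [abs_mul, hdv, abs_neg, abs_of_pos hPSpos]
      calc |s| * (P + S) ≤ ε * (P + S) := mul_le_mul_of_nonneg_right hs hPSpos.le
        _ ≤ ε * M := mul_le_mul_of_nonneg_left hdvM hεpos.le
        _ = m0 := hεM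
    refine ⟨?_, ?_, ?_, ?_⟩
    · intro m
      simp only [hgh]
      by_cases h1 : m = i
      · subst h1
        rw [hδi, mul_one]
        have h4 : m0 ≤ fh m := le_trans (min_le_left _ _) (min_le_left _ _)
        have h5 := neg_abs_le (s * du)
        linarith
      · by_cases h2 : m = j
        · subst h2
          rw [hδj]
          have h4 : m0 ≤ fh m := le_trans (min_le_left _ _) (min_le_right _ _)
          have h5 := le_abs_self (s * du)
          linarith
        · have h3 : δ m = 0 := by simp [hδ, h1, h2]
          rw [h3, mul_zero]
          simpa using hfh0 m
    · intro m
      simp only [hga]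
      by_cases h1 : m = i
      · subst h1
        rw [hδi, mul_one]
        have h4 : m0 ≤ fa m := le_trans (min_le_right _ _) (min_le_left _ _)
        have h5 := neg_abs_le (s * dv)
        linarith
      · by_cases h2 : m = j
        · subst h2
          rw [hδj]
          have h4 : m0 ≤ fa m := le_trans (min_le_right _ _) (min_le_right _ _)
          have h5 := le_abs_self (s * dv)
          linarith
        · have h3 : δ m = 0 := by simp [hδ, h1, h2]
          rw [h3, mul_zero]
          simpa using hfa0 m
    · simp only [hgh]
      rw [Finset.sum_add_distrib, ← Finset.mul_sum, hδsum, mul_zero, hFh, add_zero]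
    · simp only [hga]
      rw [Finset.sum_add_distrib, ← Finset.mul_sum, hδsum, mul_zero, hFa, add_zero]
  -- key quadratic identity
  have hsum2 : (∑ m, δ m * δ m * ((k m * a m * du + a m * dv) * (du + dv)))
      = (k i * a i * du + a i * dv) * (du + dv)
        + (k j * a j * du + a j * dv) * (du + dv) := by
    have h : ∀ m : Fin n, δ m * δ m * ((k m * a m * du + a m * dv) * (du + dv))
        = (if m = i then (k i * a i * du + a i * dv) * (du + dv) else 0)
          + (if m = j then (k j * a j * du + a j * dv) * (du + dv) else 0) := by
      intro m
      by_cases h1 : m = i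
      · subst h1
        rw [hδi]
        simp [hij]
      · by_cases h2 : m = j
        · subst h2
          rw [hδj]
          simp [h1]
        · have h3 : δ m = 0 := by simp [hδ, h1, h2]
          rw [h3]
          simp [h1, h2]
    rw [Finset.sum_congr rfl (fun m _ => h m), Finset.sum_add_distrib]
    simp [Finset.sum_ite_eq']
  have hkey : ∀ s : ℝ, SocialCost a t k (gh s) (ga s) + SocialCost a t k (gh (-s)) (ga (-s))
      = 2 * SocialCost a t k fh fa
        + 2 * s ^ 2 * ((k i * a i * du + a i * dv) * (du + dv)
          + (k j * a j * du + a j * dv) * (du + dv)) := by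
    intro s
    have hptw : ∀ m : Fin n,
        ell a t k m (gh s m) (ga s m) * (gh s m + ga s m)
        + ell a t k m (gh (-s) m) (ga (-s) m) * (gh (-s) m + ga (-s) m)
        = 2 * (ell a t k m (fh m) (fa m) * (fh m + fa m))
          + 2 * s ^ 2 * (δ m * δ m * ((k m * a m * du + a m * dv) * (du + dv))) := by
      intro m
      simp only [hgh, hga, ell]
      ring
    simp only [SocialCost]
    rw [← Finset.sum_add_distrib, Finset.sum_congr rfl (fun m _ => hptw m),
      Finset.sum_add_distrib, ← Finset.mul_sum, ← Finset.mul_sum, hsum2]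
  -- the quadratic form is strictly negative
  have hWneg : (k i * a i * du + a i * dv) * (du + dv)
      + (k j * a j * du + a j * dv) * (du + dv) < 0 := by
    have heq : (k i * a i * du + a i * dv) * (du + dv)
        + (k j * a j * du + a j * dv) * (du + dv) = -(S * ((P - S) * (P - S))) := by
      rw [hdu, hdv, hPdef, hSdef]
      ring
    rw [heq]
    have hpos : 0 < S * ((P - S) * (P - S)) :=
      mul_pos hSpos (mul_pos (sub_pos.mpr hPS) (sub_pos.mpr hPS))
    linarith
  -- contradiction with minimality
  have h1 := hmin (gh ε) (ga ε) (hfeasS ε (le_of_eq (abs_of_pos hεpos)))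
  have h2 := hmin (gh (-ε)) (ga (-ε)) (hfeasS (-ε) (by rw [abs_neg]; exact le_of_eq (abs_of_pos hεpos)))
  have h3 := hkey ε
  have hε2 : 0 < ε ^ 2 := pow_pos hεpos 2
  nlinarith
end

section
/- Let a_i, a_j > 0, t_i, t_j ≥ 0, H > 0, A > 0, and k_i, k_j ≥ 1 with not both k_i = 1 and k_j = 1. Define J : ℝ² → ℝ by J(x,y) = (k_i·a_i·x + a_i·y + t_i)·(x+y) + (k_j·a_j·(H−x) + a_j·(A−y) + t_j)·(H−x+A−y). Then J has no local minimum at any point of ℝ²; consequently, every point (x*,y*) minimizing J over the rectangle [0,H]×[0,A] satisfies x* ∈ {0,H} or y* ∈ {0,A}. -/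
/-- The two-road restricted social cost
`J(x,y) = (k_i a_i x + a_i y + t_i)(x+y) + (k_j a_j (H−x) + a_j (A−y) + t_j)(H−x+A−y)`
has no local minimum on `ℝ²`; consequently every minimizer of `J` over the rectangle
`[0,H] × [0,A]` lies on the boundary of the rectangle. -/
theorem no_interior_minimum
    (ai aj ki kj ti tj H A : ℝ)
    (hai : 0 < ai) (haj : 0 < aj) (hti : 0 ≤ ti) (htj : 0 ≤ tj)
    (hH : 0 < H) (hA : 0 < A)
    (hki : 1 ≤ ki) (hkj : 1 ≤ kj) (hnot : ¬(ki = 1 ∧ kj = 1))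
    (J : ℝ × ℝ → ℝ)
    (hJ : J = fun p =>
      (ki * ai * p.1 + ai * p.2 + ti) * (p.1 + p.2) +
      (kj * aj * (H - p.1) + aj * (A - p.2) + tj) * (H - p.1 + A - p.2)) :
    (∀ p : ℝ × ℝ, ¬ IsLocalMin J p) ∧
    (∀ x y : ℝ, x ∈ Set.Icc 0 H → y ∈ Set.Icc 0 A →
      (∀ x' y' : ℝ, x' ∈ Set.Icc 0 H → y' ∈ Set.Icc 0 A → J (x, y) ≤ J (x', y')) →
      (x = 0 ∨ x = H ∨ y = 0 ∨ y = A)) := by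
  have hS : 0 < ai * (ki - 1) + aj * (kj - 1) := by
    rcases not_and_or.mp hnot with h | h
    · have : 1 < ki := lt_of_le_of_ne hki (Ne.symm h)
      nlinarith
    · have : 1 < kj := lt_of_le_of_ne hkj (Ne.symm h)
      nlinarith
  have hmain : ∀ p : ℝ × ℝ, ¬ IsLocalMin J p := by
    intro p hmin
    set D : ℝ := ai + aj with hD
    set E : ℝ := (ki + 1) * ai + (kj + 1) * aj with hE
    have hc : Continuous (fun t : ℝ => ((p.1 + t * (2 * D), p.2 + t * (-E)) : ℝ × ℝ)) := by
      fun_prop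
    have h0 : ((p.1 + (0:ℝ) * (2 * D), p.2 + (0:ℝ) * (-E)) : ℝ × ℝ) = p := by
      simp
    have hev : ∀ᶠ t in nhds (0:ℝ), J p ≤ J (p.1 + t * (2 * D), p.2 + t * (-E)) := by
      have ht := hc.tendsto 0
      rw [h0] at ht
      exact ht.eventually hmin
    rcases Metric.eventually_nhds_iff.mp hev with ⟨ε, hε, hb⟩
    have habs : ∀ t : ℝ, |t| < ε → J p ≤ J (p.1 + t * (2 * D), p.2 + t * (-E)) := by
      intro t ht
      exact hb (by simpa [Real.dist_eq] using ht)
    have h1 := habs (ε / 2) (by rw [abs_of_pos (by linarith)]; linarith)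
    have h2 := habs (-(ε / 2)) (by rw [abs_neg, abs_of_pos (by linarith)]; linarith)
    have hiden :
        J (p.1 + (ε / 2) * (2 * D), p.2 + (ε / 2) * (-E)) +
        J (p.1 + (-(ε / 2)) * (2 * D), p.2 + (-(ε / 2)) * (-E)) - 2 * J p =
        -2 * (ε / 2) ^ 2 * D * (ai * (ki - 1) + aj * (kj - 1)) ^ 2 := by
      simp only [hJ, hD, hE]
      ring
    have hD0 : 0 < D := by positivity
    nlinarith [sq_nonneg (ε / 2), mul_pos (mul_pos (by positivity : (0:ℝ) < 2 * (ε/2)^2) hD0)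
      (mul_pos hS hS)]
  refine ⟨hmain, ?_⟩
  intro x y hx hy hmin
  by_contra hcon
  push_neg at hcon
  obtain ⟨hx0, hxH, hy0, hyA⟩ := hcon
  have hx1 : 0 < x := lt_of_le_of_ne hx.1 (Ne.symm hx0)
  have hx2 : x < H := lt_of_le_of_ne hx.2 hxH
  have hy1 : 0 < y := lt_of_le_of_ne hy.1 (Ne.symm hy0)
  have hy2 : y < A := lt_of_le_of_ne hy.2 hyA
  apply hmain (x, y)
  rw [IsLocalMin, IsMinFilter]
  rw [Metric.eventually_nhds_iff]
  refine ⟨min (min x (H - x)) (min y (A - y)), lt_min (lt_min hx1 (by linarith)) (lt_min hy1 (by linarith)), ?_⟩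
  intro q hq
  rw [Prod.dist_eq, max_lt_iff, Real.dist_eq, Real.dist_eq] at hq
  obtain ⟨hq1, hq2⟩ := hq
  have a1 := abs_lt.mp hq1
  have a2 := abs_lt.mp hq2
  have b1 : min (min x (H - x)) (min y (A - y)) ≤ x := le_trans (min_le_left _ _) (min_le_left _ _)
  have b2 : min (min x (H - x)) (min y (A - y)) ≤ H - x :=
    le_trans (min_le_left _ _) (min_le_right _ _)
  have b3 : min (min x (H - x)) (min y (A - y)) ≤ y :=
    le_trans (min_le_right _ _) (min_le_left _ _)
  have b4 : min (min x (H - x)) (min y (A - y)) ≤ A - y :=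
    le_trans (min_le_right _ _) (min_le_right _ _)
  have := hmin q.1 q.2 ⟨by linarith [a1.1], by linarith [a1.2]⟩
    ⟨by linarith [a2.1], by linarith [a2.2]⟩
  simpa using this
end

section
/- Consider a parallel network of n roads with affine latencies ℓ_i(x,y) = k_i·a_i·x + a_i·y + t_i, where a_i > 0, k_i > 0 (strictly increasing latencies), k_i = 1 for at most one road, t_i ≥ 0, and demands F^h > 0, F^a > 0. Let (f*^h, f*^a) be a feasible routing minimizing the social cost C. Fix any μ ∈ ℝ and define tolls: τ^h_i = P if f*^h_i = 0 and τ^h_i = μ − ℓ_i(f*^h_i, f*^a_i) otherwise; τ^a_i = P if f*^a_i = 0 and τ^a_i = μ − ℓ_i(f*^h_i, f*^a_i) otherwise. Then there exists P₀ such that for all P ≥ P₀: (1) (f*^h, f*^a) is a Wardrop equilibrium under the tolls (τ^h, τ^a); and (2) every Wardrop equilibrium routing with demands (F^h, F^a) under the tolls (τ^h, τ^a) has social cost equal to C(f*^h, f*^a). -/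
/-- A feasible routing is a Wardrop equilibrium under per-type tolls `(τh, τa)` if
every road carrying positive flow of a type has tolled cost at most that of every road. -/
def WardropEq {n : ℕ} (a t k : Fin n → ℝ) (τh τa : Fin n → ℝ) (Fh Fa : ℝ)
    (fh fa : Fin n → ℝ) : Prop :=
  Feasible Fh Fa fh fa ∧
  (∀ i j, 0 < fh i →
    ell a t k i (fh i) (fa i) + τh i ≤ ell a t k j (fh j) (fa j) + τh j) ∧
  (∀ i j, 0 < fa i →
    ell a t k i (fh i) (fa i) + τa i ≤ ell a t k j (fh j) (fa j) + τa j)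


noncomputable def MH {n : ℕ} (a t k fh fa : Fin n → ℝ) (i : Fin n) : ℝ :=
  ell a t k i (fh i) (fa i) + k i * a i * (fh i + fa i)

noncomputable def MA {n : ℕ} (a t k fh fa : Fin n → ℝ) (i : Fin n) : ℝ :=
  ell a t k i (fh i) (fa i) + a i * (fh i + fa i)

lemma ell_nonneg {n : ℕ} (a t k : Fin n → ℝ) (ha : ∀ i, 0 < a i) (hk : ∀ i, 0 < k i)
    (ht : ∀ i, 0 ≤ t i) (i : Fin n) {x y : ℝ} (hx : 0 ≤ x) (hy : 0 ≤ y) :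
    0 ≤ ell a t k i x y := by
  unfold ell
  have h1 : 0 ≤ k i * a i * x := mul_nonneg (mul_nonneg (hk i).le (ha i).le) hx
  have h2 : 0 ≤ a i * y := mul_nonneg (ha i).le hy
  linarith [ht i]

lemma cost_diff {n : ℕ} (a t k fh fa gh ga : Fin n → ℝ) :
    SocialCost a t k gh ga - SocialCost a t k fh fa =
      ∑ i, (MH a t k fh fa i * (gh i - fh i) + MA a t k fh fa i * (ga i - fa i) +
        (k i * a i * (gh i - fh i) + a i * (ga i - fa i)) * ((gh i - fh i) + (ga i - fa i))) := by
  unfold SocialCost MH MA ell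
  rw [← Finset.sum_sub_distrib]
  exact Finset.sum_congr rfl fun i _ => by ring

lemma kkt_h {n : ℕ} (a t k : Fin n → ℝ) (ha : ∀ i, 0 < a i) (hk : ∀ i, 0 < k i)
    (Fh Fa : ℝ) (fh fa : Fin n → ℝ) (hfeas : Feasible Fh Fa fh fa)
    (hopt : ∀ gh ga, Feasible Fh Fa gh ga → SocialCost a t k fh fa ≤ SocialCost a t k gh ga)
    (i j : Fin n) (hi : 0 < fh i) : MH a t k fh fa i ≤ MH a t k fh fa j := by
  by_contra hcon
  push_neg at hcon
  have hij : i ≠ j := by rintro rfl; exact lt_irrefl _ hcon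
  set δ : ℝ := MH a t k fh fa i - MH a t k fh fa j with hδ
  have hδpos : 0 < δ := sub_pos.mpr hcon
  set K : ℝ := k i * a i + k j * a j with hKdef
  have hK : 0 < K := add_pos (mul_pos (hk i) (ha i)) (mul_pos (hk j) (ha j))
  set ε : ℝ := min (fh i) (δ / (2 * K)) with hε
  have hεpos : 0 < ε := lt_min hi (by positivity)
  have hεi : ε ≤ fh i := min_le_left _ _
  have hεδ : ε ≤ δ / (2 * K) := min_le_right _ _
  set Δ : Fin n → ℝ := fun l => (if l = j then 1 else 0) - (if l = i then 1 else 0) with hΔ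
  set gh : Fin n → ℝ := fun l => fh l + ε * Δ l with hgh
  have hfeas' : Feasible Fh Fa gh fa := by
    refine ⟨?_, hfeas.2.1, ?_, hfeas.2.2.2⟩
    · intro l
      by_cases h1 : l = i
      · subst h1
        have : gh l = fh l - ε := by
          simp [hgh, hΔ, fun h : l = j => hij h]
          ring
        rw [this]; linarith
      · by_cases h2 : l = j
        · subst h2
          have : gh l = fh l + ε := by simp [hgh, hΔ, h1]
          rw [this]; linarith [hfeas.1 l]
        · have : gh l = fh l := by simp [hgh, hΔ, h1, h2]
          rw [this]; exact hfeas.1 l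
    · have : ∑ l, gh l = (∑ l, fh l) + ε * ((∑ l, (if l = j then (1:ℝ) else 0)) - (∑ l, (if l = i then (1:ℝ) else 0))) := by
        simp [hgh, hΔ, Finset.sum_add_distrib, Finset.mul_sum, mul_sub, Finset.sum_sub_distrib]
      rw [this]; simp [hfeas.2.2.1]
  have h0 := hopt gh fa hfeas'
  have hdiff := cost_diff a t k fh fa gh fa
  have hsum : SocialCost a t k gh fa - SocialCost a t k fh fa
      = ε * (MH a t k fh fa j - MH a t k fh fa i) + ε ^ 2 * K := by
    rw [hdiff]
    have hterm : ∀ l, MH a t k fh fa l * (gh l - fh l) + MA a t k fh fa l * (fa l - fa l) +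
        (k l * a l * (gh l - fh l) + a l * (fa l - fa l)) * ((gh l - fh l) + (fa l - fa l))
        = ε * (MH a t k fh fa l * Δ l) + ε ^ 2 * (k l * a l * (Δ l * Δ l)) := by
      intro l
      have : gh l - fh l = ε * Δ l := by simp [hgh]
      rw [this]; ring
    rw [Finset.sum_congr rfl fun l _ => hterm l, Finset.sum_add_distrib,
      ← Finset.mul_sum, ← Finset.mul_sum]
    have hΔsq : ∀ l, Δ l * Δ l = (if l = j then (1:ℝ) else 0) + (if l = i then 1 else 0) := by
      intro l
      by_cases h1 : l = j <;> by_cases h2 : l = i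
      · subst h1; exact absurd h2.symm hij
      all_goals simp [hΔ, h1, h2, hij, hij.symm]
    have h1 : ∑ l, MH a t k fh fa l * Δ l
        = MH a t k fh fa j - MH a t k fh fa i := by
      simp [hΔ, mul_sub, Finset.sum_sub_distrib, mul_ite, mul_one, mul_zero]
    have h2 : ∑ l, k l * a l * (Δ l * Δ l) = K := by
      rw [Finset.sum_congr rfl fun l _ => by rw [hΔsq l]]
      simp only [mul_add, Finset.sum_add_distrib, mul_ite, mul_one, mul_zero,
        Finset.sum_ite_eq', Finset.mem_univ, if_true, hKdef]
      ring
    rw [h1, h2]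
  have hεK : ε * K ≤ δ / 2 := by
    have h := mul_le_mul_of_nonneg_right hεδ hK.le
    have h2 : δ / (2 * K) * K = δ / 2 := by
      field_simp
    linarith
  have hneg : ε * (MH a t k fh fa j - MH a t k fh fa i) + ε ^ 2 * K < 0 := by
    have e1 : ε * (MH a t k fh fa j - MH a t k fh fa i) = -(ε * δ) := by rw [hδ]; ring
    have e2 : ε ^ 2 * K = ε * (ε * K) := by ring
    have e3 : ε * (ε * K) ≤ ε * (δ / 2) := mul_le_mul_of_nonneg_left hεK hεpos.le
    have e4 : 0 < ε * δ := mul_pos hεpos hδpos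
    rw [e1, e2]
    nlinarith
  linarith

lemma kkt_a {n : ℕ} (a t k : Fin n → ℝ) (ha : ∀ i, 0 < a i) (hk : ∀ i, 0 < k i)
    (Fh Fa : ℝ) (fh fa : Fin n → ℝ) (hfeas : Feasible Fh Fa fh fa)
    (hopt : ∀ gh ga, Feasible Fh Fa gh ga → SocialCost a t k fh fa ≤ SocialCost a t k gh ga)
    (i j : Fin n) (hi : 0 < fa i) : MA a t k fh fa i ≤ MA a t k fh fa j := by
  by_contra hcon
  push_neg at hcon
  have hij : i ≠ j := by rintro rfl; exact lt_irrefl _ hcon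
  set δ : ℝ := MA a t k fh fa i - MA a t k fh fa j with hδ
  have hδpos : 0 < δ := sub_pos.mpr hcon
  set K : ℝ := a i + a j with hKdef
  have hK : 0 < K := add_pos (ha i) (ha j)
  set ε : ℝ := min (fa i) (δ / (2 * K)) with hε
  have hεpos : 0 < ε := lt_min hi (by positivity)
  have hεi : ε ≤ fa i := min_le_left _ _
  have hεδ : ε ≤ δ / (2 * K) := min_le_right _ _
  set Δ : Fin n → ℝ := fun l => (if l = j then 1 else 0) - (if l = i then 1 else 0) with hΔ
  set ga : Fin n → ℝ := fun l => fa l + ε * Δ l with hga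
  have hfeas' : Feasible Fh Fa fh ga := by
    refine ⟨hfeas.1, ?_, hfeas.2.2.1, ?_⟩
    · intro l
      by_cases h1 : l = i
      · subst h1
        have : ga l = fa l - ε := by
          simp [hga, hΔ, fun h : l = j => hij h]
          ring
        rw [this]; linarith
      · by_cases h2 : l = j
        · subst h2
          have : ga l = fa l + ε := by simp [hga, hΔ, h1]
          rw [this]; linarith [hfeas.2.1 l]
        · have : ga l = fa l := by simp [hga, hΔ, h1, h2]
          rw [this]; exact hfeas.2.1 l
    · have : ∑ l, ga l = (∑ l, fa l) + ε * ((∑ l, (if l = j then (1:ℝ) else 0)) - (∑ l, (if l = i then (1:ℝ) else 0))) := by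
        simp [hga, hΔ, Finset.sum_add_distrib, Finset.mul_sum, mul_sub, Finset.sum_sub_distrib]
      rw [this]; simp [hfeas.2.2.2]
  have h0 := hopt fh ga hfeas'
  have hdiff := cost_diff a t k fh fa fh ga
  have hsum : SocialCost a t k fh ga - SocialCost a t k fh fa
      = ε * (MA a t k fh fa j - MA a t k fh fa i) + ε ^ 2 * K := by
    rw [hdiff]
    have hterm : ∀ l, MH a t k fh fa l * (fh l - fh l) + MA a t k fh fa l * (ga l - fa l) +
        (k l * a l * (fh l - fh l) + a l * (ga l - fa l)) * ((fh l - fh l) + (ga l - fa l))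
        = ε * (MA a t k fh fa l * Δ l) + ε ^ 2 * (a l * (Δ l * Δ l)) := by
      intro l
      have : ga l - fa l = ε * Δ l := by simp [hga]
      rw [this]; ring
    rw [Finset.sum_congr rfl fun l _ => hterm l, Finset.sum_add_distrib,
      ← Finset.mul_sum, ← Finset.mul_sum]
    have hΔsq : ∀ l, Δ l * Δ l = (if l = j then (1:ℝ) else 0) + (if l = i then 1 else 0) := by
      intro l
      by_cases h1 : l = j <;> by_cases h2 : l = i
      · subst h1; exact absurd h2.symm hij
      all_goals simp [hΔ, h1, h2, hij, hij.symm]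
    have h1 : ∑ l, MA a t k fh fa l * Δ l
        = MA a t k fh fa j - MA a t k fh fa i := by
      simp [hΔ, mul_sub, Finset.sum_sub_distrib, mul_ite, mul_one, mul_zero]
    have h2 : ∑ l, a l * (Δ l * Δ l) = K := by
      rw [Finset.sum_congr rfl fun l _ => by rw [hΔsq l]]
      simp only [mul_add, Finset.sum_add_distrib, mul_ite, mul_one, mul_zero,
        Finset.sum_ite_eq', Finset.mem_univ, if_true, hKdef]
      ring
    rw [h1, h2]
  have hεK : ε * K ≤ δ / 2 := by
    have h := mul_le_mul_of_nonneg_right hεδ hK.le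
    have h2 : δ / (2 * K) * K = δ / 2 := by
      field_simp
    linarith
  have hneg : ε * (MA a t k fh fa j - MA a t k fh fa i) + ε ^ 2 * K < 0 := by
    have e1 : ε * (MA a t k fh fa j - MA a t k fh fa i) = -(ε * δ) := by rw [hδ]; ring
    have e2 : ε ^ 2 * K = ε * (ε * K) := by ring
    have e3 : ε * (ε * K) ≤ ε * (δ / 2) := mul_le_mul_of_nonneg_left hεK hεpos.le
    have e4 : 0 < ε * δ := mul_pos hεpos hδpos
    rw [e1, e2]
    nlinarith
  linarith

/-- Differentiated tolling: with tolls `τ^h_i = P` on roads with no optimal human flow and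
`μ − ℓ_i(f*ʰ_i, f*ᵃ_i)` otherwise (and symmetrically for the autonomous type), for all
sufficiently large `P` the socially optimal routing `(f*ʰ, f*ᵃ)` is a Wardrop equilibrium,
and every Wardrop equilibrium has the same social cost as `(f*ʰ, f*ᵃ)`. -/
theorem differentiated_tolls_enforce_optimum
    (n : ℕ) (a t k : Fin n → ℝ)
    (ha : ∀ i, 0 < a i) (hk : ∀ i, 0 < k i) (ht : ∀ i, 0 ≤ t i)
    (hk1 : ∀ i j, k i = 1 → k j = 1 → i = j)
    (Fh Fa : ℝ) (hFh : 0 < Fh) (hFa : 0 < Fa)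
    (fsh fsa : Fin n → ℝ)
    (hfeas : Feasible Fh Fa fsh fsa)
    (hopt : ∀ gh ga : Fin n → ℝ, Feasible Fh Fa gh ga →
      SocialCost a t k fsh fsa ≤ SocialCost a t k gh ga)
    (μ : ℝ) :
    ∃ P₀ : ℝ, ∀ P : ℝ, P₀ ≤ P →
      (WardropEq a t k
        (fun i => if fsh i = 0 then P else μ - ell a t k i (fsh i) (fsa i))
        (fun i => if fsa i = 0 then P else μ - ell a t k i (fsh i) (fsa i))
        Fh Fa fsh fsa) ∧
      (∀ gh ga : Fin n → ℝ,
        WardropEq a t k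
          (fun i => if fsh i = 0 then P else μ - ell a t k i (fsh i) (fsa i))
          (fun i => if fsa i = 0 then P else μ - ell a t k i (fsh i) (fsa i))
          Fh Fa gh ga →
        SocialCost a t k gh ga = SocialCost a t k fsh fsa) := by
  classical
  obtain ⟨fshnn, fsann, fshsum, fsasum⟩ := hfeas
  have hfeas' : Feasible Fh Fa fsh fsa := ⟨fshnn, fsann, fshsum, fsasum⟩
  have hLnn : ∀ i, 0 ≤ ell a t k i (fsh i) (fsa i) :=
    fun i => ell_nonneg a t k ha hk ht i (fshnn i) (fsann i)
  set P₀ : ℝ := 1 + ∑ j, (|μ - ell a t k j (fsh j) (fsa j)| + k j * a j * Fh + a j * Fa + t j)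
    with hP₀def
  have htermnn : ∀ j, 0 ≤ |μ - ell a t k j (fsh j) (fsa j)| + k j * a j * Fh + a j * Fa + t j := by
    intro j
    have h1 : 0 ≤ k j * a j * Fh := mul_nonneg (mul_nonneg (hk j).le (ha j).le) hFh.le
    have h2 : 0 ≤ a j * Fa := mul_nonneg (ha j).le hFa.le
    have h3 : (0:ℝ) ≤ |μ - ell a t k j (fsh j) (fsa j)| := abs_nonneg _
    linarith [ht j]
  have hP₀ge : ∀ j, |μ - ell a t k j (fsh j) (fsa j)| + k j * a j * Fh + a j * Fa + t j + 1 ≤ P₀ := by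
    intro j
    have := Finset.single_le_sum (f := fun j =>
        |μ - ell a t k j (fsh j) (fsa j)| + k j * a j * Fh + a j * Fa + t j)
      (fun i _ => htermnn i) (Finset.mem_univ j)
    rw [hP₀def]; linarith
  -- some road with positive optimal human flow, and with positive autonomous flow
  have hexh : ∃ j, 0 < fsh j := by
    by_contra h
    push_neg at h
    have : ∑ i, fsh i ≤ 0 := Finset.sum_nonpos fun i _ => h i
    rw [fshsum] at this; linarith
  have hexa : ∃ j, 0 < fsa j := by
    by_contra h
    push_neg at h
    have : ∑ i, fsa i ≤ 0 := Finset.sum_nonpos fun i _ => h i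
    rw [fsasum] at this; linarith
  obtain ⟨j₀, hj₀⟩ := hexh
  refine ⟨P₀, fun P hP => ⟨⟨hfeas', ?_, ?_⟩, ?_⟩⟩
  · -- optimal routing is equilibrium: human side
    intro i j hi
    simp only
    rw [if_neg (ne_of_gt hi)]
    by_cases hj : fsh j = 0
    · rw [if_pos hj]
      have h1 := hP₀ge j
      have h2 := le_abs_self (μ - ell a t k j (fsh j) (fsa j))
      have h3 : 0 ≤ k j * a j * Fh := mul_nonneg (mul_nonneg (hk j).le (ha j).le) hFh.le
      have h4 : 0 ≤ a j * Fa := mul_nonneg (ha j).le hFa.le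
      linarith [hLnn j, ht j]
    · rw [if_neg hj]; linarith
  · -- autonomous side
    intro i j hi
    simp only
    rw [if_neg (ne_of_gt hi)]
    by_cases hj : fsa j = 0
    · rw [if_pos hj]
      have h1 := hP₀ge j
      have h2 := le_abs_self (μ - ell a t k j (fsh j) (fsa j))
      have h3 : 0 ≤ k j * a j * Fh := mul_nonneg (mul_nonneg (hk j).le (ha j).le) hFh.le
      have h4 : 0 ≤ a j * Fa := mul_nonneg (ha j).le hFa.le
      linarith [hLnn j, ht j]
    · rw [if_neg hj]; linarith
  · -- every equilibrium has the optimal social cost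
    rintro gh ga ⟨⟨ghnn, gann, ghsum, gasum⟩, geqh, geqa⟩
    have gfeas : Feasible Fh Fa gh ga := ⟨ghnn, gann, ghsum, gasum⟩
    have hghle : ∀ j, gh j ≤ Fh := by
      intro j
      rw [← ghsum]
      exact Finset.single_le_sum (fun i _ => ghnn i) (Finset.mem_univ j)
    have hgale : ∀ j, ga j ≤ Fa := by
      intro j
      rw [← gasum]
      exact Finset.single_le_sum (fun i _ => gann i) (Finset.mem_univ j)
    have hgellub : ∀ j, ell a t k j (gh j) (ga j)
        ≤ k j * a j * Fh + a j * Fa + t j := by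
      intro j
      unfold ell
      have h1 : k j * a j * gh j ≤ k j * a j * Fh :=
        mul_le_mul_of_nonneg_left (hghle j) (mul_nonneg (hk j).le (ha j).le)
      have h2 : a j * ga j ≤ a j * Fa := mul_le_mul_of_nonneg_left (hgale j) (ha j).le
      linarith
    -- support containment
    have hA : ∀ i, fsh i = 0 → gh i = 0 := by
      intro i h0
      by_contra hne
      have hpos : 0 < gh i := lt_of_le_of_ne (ghnn i) (Ne.symm hne)
      have hle := geqh i j₀ hpos
      simp only at hle
      rw [if_pos h0, if_neg (ne_of_gt hj₀)] at hle
      have h1 : 0 ≤ ell a t k i (gh i) (ga i) :=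
        ell_nonneg a t k ha hk ht i (ghnn i) (gann i)
      have h2 := hgellub j₀
      have h3 := le_abs_self (μ - ell a t k j₀ (fsh j₀) (fsa j₀))
      have h4 := hP₀ge j₀
      linarith
    have hB : ∀ i, fsa i = 0 → ga i = 0 := by
      obtain ⟨j₁, hj₁⟩ := hexa
      intro i h0
      by_contra hne
      have hpos : 0 < ga i := lt_of_le_of_ne (gann i) (Ne.symm hne)
      have hle := geqa i j₁ hpos
      simp only at hle
      rw [if_pos h0, if_neg (ne_of_gt hj₁)] at hle
      have h1 : 0 ≤ ell a t k i (gh i) (ga i) :=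
        ell_nonneg a t k ha hk ht i (ghnn i) (gann i)
      have h2 := hgellub j₁
      have h3 := le_abs_self (μ - ell a t k j₁ (fsh j₁) (fsa j₁))
      have h4 := hP₀ge j₁
      linarith
    -- roads with positive equilibrium flow
    have hexgh : ∃ i, 0 < gh i := by
      by_contra h
      push_neg at h
      have : ∑ i, gh i ≤ 0 := Finset.sum_nonpos fun i _ => h i
      rw [ghsum] at this; linarith
    have hexga : ∃ i, 0 < ga i := by
      by_contra h
      push_neg at h
      have : ∑ i, ga i ≤ 0 := Finset.sum_nonpos fun i _ => h i
      rw [gasum] at this; linarith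
    obtain ⟨i₀, hi₀⟩ := hexgh
    obtain ⟨i₁, hi₁⟩ := hexga
    have hfsi₀ : 0 < fsh i₀ := by
      rcases (fshnn i₀).lt_or_eq with h | h
      · exact h
      · exact absurd (hA i₀ h.symm ▸ hi₀) (lt_irrefl 0)
    have hfsi₁ : 0 < fsa i₁ := by
      rcases (fsann i₁).lt_or_eq with h | h
      · exact h
      · exact absurd (hB i₁ h.symm ▸ hi₁) (lt_irrefl 0)
    set d : Fin n → ℝ :=
      fun i => k i * a i * (gh i - fsh i) + a i * (ga i - fsa i) with hd
    have hellg : ∀ i, ell a t k i (gh i) (ga i) = ell a t k i (fsh i) (fsa i) + d i := by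
      intro i; rw [hd]; unfold ell; ring
    -- equilibrium transfers to d-order
    have hdcondh : ∀ i j, 0 < gh i → fsh i ≠ 0 → fsh j ≠ 0 → d i ≤ d j := by
      intro i j hgi hfi hfj
      have hle := geqh i j hgi
      simp only at hle
      rw [if_neg hfi, if_neg hfj] at hle
      have e1 := hellg i
      have e2 := hellg j
      linarith
    have hdconda : ∀ i j, 0 < ga i → fsa i ≠ 0 → fsa j ≠ 0 → d i ≤ d j := by
      intro i j hgi hfi hfj
      have hle := geqa i j hgi
      simp only at hle
      rw [if_neg hfi, if_neg hfj] at hle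
      have e1 := hellg i
      have e2 := hellg j
      linarith
    -- pointwise bounds
    have hdx : ∀ i, d i * (gh i - fsh i) ≤ d i₀ * (gh i - fsh i) := by
      intro i
      rcases lt_trichotomy (gh i - fsh i) 0 with h | h | h
      · have hfi : fsh i ≠ 0 := by
          intro h0
          rw [h0, hA i h0] at h; simp at h
        have h1 : d i₀ ≤ d i := hdcondh i₀ i hi₀ (ne_of_gt hfsi₀) hfi
        exact mul_le_mul_of_nonpos_right h1 h.le
      · rw [h]; simp
      · have hghi : 0 < gh i := by linarith [fshnn i]
        have hfi : fsh i ≠ 0 := by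
          intro h0
          rw [h0, hA i h0] at h; simp at h
        have h1 : d i ≤ d i₀ := hdcondh i i₀ hghi hfi (ne_of_gt hfsi₀)
        exact mul_le_mul_of_nonneg_right h1 h.le
    have hdy : ∀ i, d i * (ga i - fsa i) ≤ d i₁ * (ga i - fsa i) := by
      intro i
      rcases lt_trichotomy (ga i - fsa i) 0 with h | h | h
      · have hfi : fsa i ≠ 0 := by
          intro h0
          rw [h0, hB i h0] at h; simp at h
        have h1 : d i₁ ≤ d i := hdconda i₁ i hi₁ (ne_of_gt hfsi₁) hfi
        exact mul_le_mul_of_nonpos_right h1 h.le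
      · rw [h]; simp
      · have hgai : 0 < ga i := by linarith [fsann i]
        have hfi : fsa i ≠ 0 := by
          intro h0
          rw [h0, hB i h0] at h; simp at h
        have h1 : d i ≤ d i₁ := hdconda i i₁ hgai hfi (ne_of_gt hfsi₁)
        exact mul_le_mul_of_nonneg_right h1 h.le
    -- first-order optimality: marginal costs constant where flow changes
    have hmhconst : ∀ i, gh i - fsh i ≠ 0 → MH a t k fsh fsa i = MH a t k fsh fsa i₀ := by
      intro i hne
      have hfi : 0 < fsh i := by
        rcases (fshnn i).lt_or_eq with h | h
        · exact h
        · exact absurd (by rw [hA i h.symm, ← h]; ring : gh i - fsh i = 0) hne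
      exact le_antisymm
        (kkt_h a t k ha hk Fh Fa fsh fsa hfeas' hopt i i₀ hfi)
        (kkt_h a t k ha hk Fh Fa fsh fsa hfeas' hopt i₀ i hfsi₀)
    have hmaconst : ∀ i, ga i - fsa i ≠ 0 → MA a t k fsh fsa i = MA a t k fsh fsa i₁ := by
      intro i hne
      have hfi : 0 < fsa i := by
        rcases (fsann i).lt_or_eq with h | h
        · exact h
        · exact absurd (by rw [hB i h.symm, ← h]; ring : ga i - fsa i = 0) hne
      exact le_antisymm
        (kkt_a a t k ha hk Fh Fa fsh fsa hfeas' hopt i i₁ hfi)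
        (kkt_a a t k ha hk Fh Fa fsh fsa hfeas' hopt i₁ i hfsi₁)
    -- sums
    have hsumx : ∑ i, (gh i - fsh i) = 0 := by
      rw [Finset.sum_sub_distrib, ghsum, fshsum]; ring
    have hsumy : ∑ i, (ga i - fsa i) = 0 := by
      rw [Finset.sum_sub_distrib, gasum, fsasum]; ring
    have S1 : ∑ i, MH a t k fsh fsa i * (gh i - fsh i) = 0 := by
      have : ∀ i, MH a t k fsh fsa i * (gh i - fsh i)
          = MH a t k fsh fsa i₀ * (gh i - fsh i) := by
        intro i
        by_cases hne : gh i - fsh i = 0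
        · rw [hne]; ring
        · rw [hmhconst i hne]
      rw [Finset.sum_congr rfl fun i _ => this i, ← Finset.mul_sum, hsumx, mul_zero]
    have S2 : ∑ i, MA a t k fsh fsa i * (ga i - fsa i) = 0 := by
      have : ∀ i, MA a t k fsh fsa i * (ga i - fsa i)
          = MA a t k fsh fsa i₁ * (ga i - fsa i) := by
        intro i
        by_cases hne : ga i - fsa i = 0
        · rw [hne]; ring
        · rw [hmaconst i hne]
      rw [Finset.sum_congr rfl fun i _ => this i, ← Finset.mul_sum, hsumy, mul_zero]
    have S3 : ∑ i, d i * ((gh i - fsh i) + (ga i - fsa i)) ≤ 0 := by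
      have heq : ∀ i, d i * ((gh i - fsh i) + (ga i - fsa i))
          = d i * (gh i - fsh i) + d i * (ga i - fsa i) := fun i => by ring
      rw [Finset.sum_congr rfl fun i _ => heq i, Finset.sum_add_distrib]
      have b1 : ∑ i, d i * (gh i - fsh i) ≤ ∑ i, d i₀ * (gh i - fsh i) :=
        Finset.sum_le_sum fun i _ => hdx i
      have b2 : ∑ i, d i * (ga i - fsa i) ≤ ∑ i, d i₁ * (ga i - fsa i) :=
        Finset.sum_le_sum fun i _ => hdy i
      rw [← Finset.mul_sum, hsumx, mul_zero] at b1
      rw [← Finset.mul_sum, hsumy, mul_zero] at b2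
      linarith
    have hcd := cost_diff a t k fsh fsa gh ga
    have hsplit : SocialCost a t k gh ga - SocialCost a t k fsh fsa
        = (∑ i, MH a t k fsh fsa i * (gh i - fsh i))
          + (∑ i, MA a t k fsh fsa i * (ga i - fsa i))
          + (∑ i, d i * ((gh i - fsh i) + (ga i - fsa i))) := by
      rw [hcd, Finset.sum_add_distrib, Finset.sum_add_distrib]
    have hge := hopt gh ga gfeas
    rw [S1, S2] at hsplit
    linarith
end

section
/- In the setting of the differentiated tolling scheme (parallel network with affine latencies ℓ_i(x,y) = k_i·a_i·x + a_i·y + t_i, a_i > 0, k_i > 0, t_i ≥ 0, socially optimal routing (f*^h, f*^a) for demands (F^h, F^a), and tolls τ^h_i = P if f*^h_i = 0 else μ − ℓ_i(f*^h_i, f*^a_i), τ^a_i = P if f*^a_i = 0 else μ − ℓ_i(f*^h_i, f*^a_i)), there exists P₀ such that for all P ≥ P₀ the routing (f*^h, f*^a) is a Wardrop equilibrium under (τ^h, τ^a), and moreover ℓ_i(f*^h_i, f*^a_i) + τ^h_i = μ for every road i with f*^h_i > 0 and ℓ_i(f*^h_i, f*^a_i) + τ^a_i = μ for every road i with f*^a_i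 > 0. -/
/-- Under the differentiated tolling scheme, for all sufficiently large `P` the socially
optimal routing `(f*ʰ, f*ᵃ)` is a Wardrop equilibrium, and every road used by a given
vehicle type in `(f*ʰ, f*ᵃ)` has tolled cost exactly `μ` for that type. -/
theorem optimal_routing_is_equilibrium_with_cost_mu
    (n : ℕ) (a t k : Fin n → ℝ)
    (ha : ∀ i, 0 < a i) (hk : ∀ i, 0 < k i) (ht : ∀ i, 0 ≤ t i)
    (Fh Fa : ℝ)
    (fsh fsa : Fin n → ℝ)
    (hfeas : Feasible Fh Fa fsh fsa)
    (hopt : ∀ gh ga : Fin n → ℝ, Feasible Fh Fa gh ga →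
      SocialCost a t k fsh fsa ≤ SocialCost a t k gh ga)
    (μ : ℝ) :
    ∃ P₀ : ℝ, ∀ P : ℝ, P₀ ≤ P →
      (WardropEq a t k
        (fun i => if fsh i = 0 then P else μ - ell a t k i (fsh i) (fsa i))
        (fun i => if fsa i = 0 then P else μ - ell a t k i (fsh i) (fsa i))
        Fh Fa fsh fsa) ∧
      (∀ i, 0 < fsh i →
        ell a t k i (fsh i) (fsa i) +
          (if fsh i = 0 then P else μ - ell a t k i (fsh i) (fsa i)) = μ) ∧
      (∀ i, 0 < fsa i →
        ell a t k i (fsh i) (fsa i) +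
          (if fsa i = 0 then P else μ - ell a t k i (fsh i) (fsa i)) = μ) := by
  refine ⟨μ, fun P hP => ?_⟩
  obtain ⟨hh, ha', hsh, hsa⟩ := hfeas
  have hell : ∀ j, 0 ≤ ell a t k j (fsh j) (fsa j) := by
    intro j
    have := ha j
    have := hk j
    have := ht j
    have := hh j
    have := ha' j
    unfold ell
    positivity
  have key1 : ∀ i, 0 < fsh i →
      ell a t k i (fsh i) (fsa i) +
        (if fsh i = 0 then P else μ - ell a t k i (fsh i) (fsa i)) = μ := by
    intro i hi
    rw [if_neg (ne_of_gt hi)]; ring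
  have key2 : ∀ i, 0 < fsa i →
      ell a t k i (fsh i) (fsa i) +
        (if fsa i = 0 then P else μ - ell a t k i (fsh i) (fsa i)) = μ := by
    intro i hi
    rw [if_neg (ne_of_gt hi)]; ring
  have bound : ∀ (j : Fin n) (c : Prop) [Decidable c],
      μ ≤ ell a t k j (fsh j) (fsa j) +
        (if c then P else μ - ell a t k j (fsh j) (fsa j)) := by
    intro j c _
    by_cases hc : c
    · rw [if_pos hc]
      have := hell j
      linarith
    · rw [if_neg hc]; linarith
  refine ⟨⟨⟨hh, ha', hsh, hsa⟩, ?_, ?_⟩, key1, key2⟩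
  · intro i j hi
    rw [key1 i hi]
    exact bound j _
  · intro i j hi
    rw [key2 i hi]
    exact bound j _
end

section
/- In the setting of the differentiated tolling scheme (parallel network with affine latencies ℓ_i(x,y) = k_i·a_i·x + a_i·y + t_i, a_i > 0, k_i > 0, t_i ≥ 0, socially optimal routing (f*^h, f*^a) for demands F^h > 0 and F^a > 0, and tolls τ^h_i = P if f*^h_i = 0 else μ − ℓ_i(f*^h_i, f*^a_i), τ^a_i = P if f*^a_i = 0 else μ − ℓ_i(f*^h_i, f*^a_i)), there exists P₀ such that for all P ≥ P₀, every Wardrop equilibrium routing (f^h, f^a) with demands (F^h, F^a) under (τ^h, τ^a) satisfies f^h_i = 0 for every road i with f*^h_i = 0, and f^a_i = 0 for every road i with f*^a_i = 0. -/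
/-- Under the differentiated tolling scheme, for all sufficiently large `P`, every Wardrop
equilibrium routing places no human flow on roads with no optimal human flow, and no
autonomous flow on roads with no optimal autonomous flow. -/
theorem large_tolls_keep_types_off_forbidden_roads
    (n : ℕ) (a t k : Fin n → ℝ)
    (ha : ∀ i, 0 < a i) (hk : ∀ i, 0 < k i) (ht : ∀ i, 0 ≤ t i)
    (Fh Fa : ℝ) (hFh : 0 < Fh) (hFa : 0 < Fa)
    (fsh fsa : Fin n → ℝ)
    (hfeas : Feasible Fh Fa fsh fsa)
    (hopt : ∀ gh ga : Fin n → ℝ, Feasible Fh Fa gh ga →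
      SocialCost a t k fsh fsa ≤ SocialCost a t k gh ga)
    (μ : ℝ) :
    ∃ P₀ : ℝ, ∀ P : ℝ, P₀ ≤ P →
      ∀ fh fa : Fin n → ℝ,
        WardropEq a t k
          (fun i => if fsh i = 0 then P else μ - ell a t k i (fsh i) (fsa i))
          (fun i => if fsa i = 0 then P else μ - ell a t k i (fsh i) (fsa i))
          Fh Fa fh fa →
        (∀ i, fsh i = 0 → fh i = 0) ∧ (∀ i, fsa i = 0 → fa i = 0) := by

  obtain ⟨hsh, hsa, hsumh, hsuma⟩ := hfeas
  set M : ℝ := ∑ j, (k j * a j * Fh + a j * Fa + t j) with hM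
  refine ⟨1 + μ + M, fun P hP fh fa hW => ?_⟩
  obtain ⟨⟨hfh, hfa, hFh', hFa'⟩, hWh, hWa⟩ := hW
  have hMj : ∀ j, k j * a j * Fh + a j * Fa + t j ≤ M := fun j =>
    Finset.single_le_sum (fun i _ => by
      have h1 := mul_nonneg (mul_nonneg (hk i).le (ha i).le) hFh.le
      have h2 := mul_nonneg (ha i).le hFa.le
      have h3 := ht i
      show (0:ℝ) ≤ k i * a i * Fh + a i * Fa + t i
      linarith) (Finset.mem_univ j)
  have hellnn : ∀ (g h : Fin n → ℝ), (∀ i, 0 ≤ g i) → (∀ i, 0 ≤ h i) →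
      ∀ j, 0 ≤ ell a t k j (g j) (h j) := by
    intro g h hg hh j
    unfold ell
    have h1 := mul_nonneg (mul_nonneg (hk j).le (ha j).le) (hg j)
    have h2 := mul_nonneg (ha j).le (hh j)
    have h3 := ht j
    linarith
  have hellb : ∀ j, ell a t k j (fh j) (fa j) ≤ k j * a j * Fh + a j * Fa + t j := by
    intro j
    have h1 : fh j ≤ Fh := hFh' ▸ Finset.single_le_sum (fun i _ => hfh i) (Finset.mem_univ j)
    have h2 : fa j ≤ Fa := hFa' ▸ Finset.single_le_sum (fun i _ => hfa i) (Finset.mem_univ j)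
    unfold ell
    have := mul_le_mul_of_nonneg_left h1 (mul_pos (hk j) (ha j)).le
    have := mul_le_mul_of_nonneg_left h2 (ha j).le
    linarith
  constructor
  · intro i hi
    by_contra hne
    have hpos : 0 < fh i := lt_of_le_of_ne (hfh i) (Ne.symm hne)
    obtain ⟨j, hj⟩ : ∃ j, 0 < fsh j := by
      by_contra h; push_neg at h
      have hz : ∀ j, fsh j = 0 := fun j => le_antisymm (h j) (hsh j)
      rw [Finset.sum_congr rfl (fun j _ => hz j), Finset.sum_const_zero] at hsumh
      linarith
    have := hWh i j hpos
    simp only [hi, if_pos rfl, if_neg hj.ne', eq_self_iff_true, if_true] at this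
    have h0 := hellnn fh fa hfh hfa i
    have h1 := hellnn fsh fsa hsh hsa j
    have h2 := hellb j
    have h3 := hMj j
    linarith
  · intro i hi
    by_contra hne
    have hpos : 0 < fa i := lt_of_le_of_ne (hfa i) (Ne.symm hne)
    obtain ⟨j, hj⟩ : ∃ j, 0 < fsa j := by
      by_contra h; push_neg at h
      have hz : ∀ j, fsa j = 0 := fun j => le_antisymm (h j) (hsa j)
      rw [Finset.sum_congr rfl (fun j _ => hz j), Finset.sum_const_zero] at hsuma
      linarith
    have := hWa i j hpos
    simp only [hi, if_pos rfl, if_neg hj.ne', eq_self_iff_true, if_true] at this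
    have h0 := hellnn fh fa hfh hfa i
    have h1 := hellnn fsh fsa hsh hsa j
    have h2 := hellb j
    have h3 := hMj j
    linarith
end

section
/- Consider the two-road parallel network with latencies ℓ₁(x,y) = k·x + y and ℓ₂(x,y) = x + k·y, where k ≥ 1, with human demand 1 and autonomous demand 1. The minimum of the social cost C(f^h,f^a) = (k·f^h₁ + f^a₁)·(f^h₁ + f^a₁) + (f^h₂ + k·f^a₂)·(f^h₂ + f^a₂) over all feasible routings equals 2, and it is attained at the routing f^h₁ = 0, f^a₁ = 1, f^h₂ = 1, f^a₂ = 0. -/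
/-- In the two-road network with latencies `ℓ₁(x,y) = kx + y` and `ℓ₂(x,y) = x + ky`,
`k ≥ 1`, and unit human and autonomous demands, the minimum social cost over feasible
routings is `2`, attained at the routing `fʰ₁ = 0, fᵃ₁ = 1, fʰ₂ = 1, fᵃ₂ = 0`. -/
theorem two_road_optimal_cost (k : ℝ) (hk : 1 ≤ k) :
    ((k * 0 + 1) * (0 + 1) + (1 + k * 0) * (1 + 0) = 2) ∧
    (∀ fh1 fh2 fa1 fa2 : ℝ,
      0 ≤ fh1 → 0 ≤ fh2 → 0 ≤ fa1 → 0 ≤ fa2 →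
      fh1 + fh2 = 1 → fa1 + fa2 = 1 →
      2 ≤ (k * fh1 + fa1) * (fh1 + fa1) + (fh2 + k * fa2) * (fh2 + fa2)) := by
  constructor
  · ring
  · intro fh1 fh2 fa1 fa2 h1 h2 h3 h4 hs ha
    have e2 : fh2 = 1 - fh1 := by linarith
    have e4 : fa2 = 1 - fa1 := by linarith
    subst e2 e4
    nlinarith [mul_nonneg (sub_nonneg.2 hk) (by linarith : (0:ℝ) ≤ fh1 + (1 - fa1)),
      mul_nonneg (by linarith : (0:ℝ) ≤ 1 + k) (sq_nonneg (1 - fh1 - fa1))]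
end

section
/- For every real k ≥ 1, the minimum over x ∈ [0,1] of the function f(x) = k·x² + (2 − x)·(1 − x + k) equals (7k+3)/4 − 1/(k+1), attained at x = (k+3)/(2(k+1)); moreover (7k+3)/4 − 1/(k+1) ≤ 2k, with equality if and only if k = 1. -/
/-- For `k ≥ 1`, the minimum over `x ∈ [0,1]` of `f(x) = kx² + (2−x)(1−x+k)` is
`(7k+3)/4 − 1/(k+1)`, attained at `x = (k+3)/(2(k+1))`; moreover this minimum is at most
`2k`, with equality if and only if `k = 1`. -/
theorem best_undifferentiated_toll_cost (k : ℝ) (hk : 1 ≤ k) :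
    IsLeast ((fun x : ℝ => k * x ^ 2 + (2 - x) * (1 - x + k)) '' Set.Icc 0 1)
      ((7 * k + 3) / 4 - 1 / (k + 1)) ∧
    ((k + 3) / (2 * (k + 1)) ∈ Set.Icc (0:ℝ) 1 ∧
      k * ((k + 3) / (2 * (k + 1))) ^ 2 +
        (2 - (k + 3) / (2 * (k + 1))) * (1 - (k + 3) / (2 * (k + 1)) + k)
        = (7 * k + 3) / 4 - 1 / (k + 1)) ∧
    ((7 * k + 3) / 4 - 1 / (k + 1) ≤ 2 * k) ∧
    ((7 * k + 3) / 4 - 1 / (k + 1) = 2 * k ↔ k = 1) := by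
  have hk1 : (0:ℝ) < k + 1 := by linarith
  have hk2 : (0:ℝ) < 2 * (k + 1) := by linarith
  have hmem : (k + 3) / (2 * (k + 1)) ∈ Set.Icc (0:ℝ) 1 := by
    constructor
    · positivity
    · rw [div_le_one hk2]; linarith
  have hval : k * ((k + 3) / (2 * (k + 1))) ^ 2 +
      (2 - (k + 3) / (2 * (k + 1))) * (1 - (k + 3) / (2 * (k + 1)) + k)
      = (7 * k + 3) / 4 - 1 / (k + 1) := by
    field_simp
    ring
  have hm : (7 * k + 3) / 4 - 1 / (k + 1) = (7 * k ^ 2 + 10 * k - 1) / (4 * (k + 1)) := by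
    field_simp; ring
  refine ⟨⟨⟨(k + 3) / (2 * (k + 1)), hmem, hval⟩, ?_⟩, ⟨hmem, hval⟩, ?_, ?_⟩
  · rintro y ⟨x, hx, rfl⟩
    simp only
    rw [hm, div_le_iff₀ (by positivity)]
    nlinarith [sq_nonneg (2 * (k + 1) * x - (k + 3))]
  · rw [hm, div_le_iff₀ (by positivity)]
    nlinarith [sq_nonneg (k - 1)]
  · constructor
    · intro h
      rw [hm] at h
      have h2 : 7 * k ^ 2 + 10 * k - 1 = 2 * k * (4 * (k + 1)) := by
        field_simp at h; linarith
      have : (k - 1) ^ 2 = 0 := by nlinarith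
      have := pow_eq_zero_iff (n := 2) (by norm_num) |>.mp this
      linarith
    · rintro rfl; norm_num
end
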